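/- arXiv:1911.09412 — 3 statements merged into one kernel-verified Lean document; each statement's English description precedes it below -/
import Mathlib

section
/- (Arrow decomposition theorem.) Let n ≥ 3, m ≥ 1, p ≥ 2, and let I₁,…,I_p ⊆ {1,…,n} with I₁ ∪ … ∪ I_p = {1,…,n}. Assume: (Assumption 1) for every k there exists ℓ ≠ k with I_k ∩ I_ℓ ≠ ∅; (Assumption 2) no I_ℓ is a subset of another I_k; also m < |I_k ∩ I_ℓ| for every pair k < ℓ with I_k ∩ I_ℓ ≠ ∅. For k = 1,…,p let A_k be a symmetric positive semidefinite n×n matrix supported on I_k and B_k an n×m matrix row-supported on I_k. Assume A := Σ_{k=1}^p A_k is positive definite and let C be a symmetric positive definite m×m matrix. Define M_k = [A_k, B_k; B_kᵀ, 0] and M = Σ_{k=1}^p M_k + [0, 0; 0, C]. Then the following are equivalent: (i) M ⪰ 0; (ii) there exist n×m matrices D_{k,ℓ}, for 1 ≤ k < ℓ ≤ p, each row-supported on I_k ∩ I_ℓ (and equal to zero whenever I_k ∩ I_ℓ = ∅), and symmetric m×m matrices C₁,…,C_p with Σ_{k=1}^p C_k = C, such that for every k = 1,…,p, setting G_k :=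 − Σ_{ℓ<k} D_{ℓ,k} + Σ_{ℓ>k} D_{k,ℓ}, the matrix M̃_k := [A_k, B_k + G_k; (B_k + G_k)ᵀ, C_k] is positive semidefinite (and consequently M = Σ_{k=1}^p M̃_k). -/
/-!
Only (i) ⇒ (ii) has content. Write `A = ∑ A_k`, `B = ∑ B_k` and `W = A⁻¹ B`. The matrices
`G_k = A_k W - B_k` are row-supported on `I_k` and sum to zero, and every such family has the form
`G_k = -∑_{ℓ<k} D_{ℓk} + ∑_{ℓ>k} D_{kℓ}` with `D_{kℓ}` row-supported on `I_k ∩ I_ℓ`: route row `i`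
of every `G_ℓ` through the least `k` with `i ∈ I_k`. Then `B_k + G_k = A_k W`, and
`[A_k, A_k W; (A_k W)ᵀ, Wᵀ A_k W]` is a congruence transform of `A_k`, hence positive
semidefinite. These corner blocks add up to `Bᵀ A⁻¹ B`; the rest of `C` is the Schur complement
`C - Bᵀ A⁻¹ B` of `A` in `M`, which is positive semidefinite and is added to a single `C_k`.
-/

open Matrix

/-- An `n×n` matrix is supported on `I` if `Y i j = 0` whenever `i ∉ I` or `j ∉ I`. -/
def MatSupportedOn {n : ℕ} (Y : Matrix (Fin n) (Fin n) ℝ) (I : Finset (Fin n)) : Prop :=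
  ∀ i j, (i ∉ I ∨ j ∉ I) → Y i j = 0

/-- An `n×m` matrix is row-supported on `I` if its `i`-th row vanishes for `i ∉ I`. -/
def RowSupportedOn {n m : ℕ} (B : Matrix (Fin n) (Fin m) ℝ) (I : Finset (Fin n)) : Prop :=
  ∀ i, i ∉ I → ∀ j, B i j = 0

open Finset

section Telescoping

variable {ι : Type*} [Fintype ι] [LinearOrder ι]

theorem Finset.sum_eq_sum_filter_lt_add_add_sum_filter_gt {M : Type*} [AddCommMonoid M]
    (f : ι → M) (k : ι) :
    ∑ ℓ, f ℓ = ∑ ℓ ∈ univ.filter (fun ℓ => ℓ < k), f ℓ + f k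
      + ∑ ℓ ∈ univ.filter (fun ℓ => k < ℓ), f ℓ := by
  rw [← sum_filter_add_sum_filter_not univ (fun ℓ => ℓ < k) f]
  have : univ.filter (fun ℓ => ¬ ℓ < k) = insert k (univ.filter (fun ℓ => k < ℓ)) := by
    ext ℓ; simp [le_iff_lt_or_eq, eq_comm, or_comm]
  rw [this, sum_insert (by simp), add_assoc]

open Classical in
theorem neg_sum_filter_lt_add_sum_filter_gt_eq {V : Type*} [AddCommGroup V] {s : Finset ι}
    {g : ι → V} (hg : ∀ k ∉ s, g k = 0) (hsum : ∑ k, g k = 0) (k : ι) :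
    -(∑ ℓ ∈ univ.filter (fun ℓ => ℓ < k), if IsLeast (s : Set ι) ℓ then -g k else 0)
      + ∑ ℓ ∈ univ.filter (fun ℓ => k < ℓ), (if IsLeast (s : Set ι) k then -g ℓ else 0)
      = g k := by
  by_cases hk : IsLeast (s : Set ι) k
  · have hlow : ∀ ℓ < k, g ℓ = 0 := fun ℓ hℓ =>
      hg ℓ fun hs => (hk.2 hs).not_gt hℓ
    have hlow_not_least : ∀ ℓ < k, ¬ IsLeast (s : Set ι) ℓ := fun ℓ hℓ hℓs =>
      hℓ.ne (hℓs.unique hk)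
    rw [sum_eq_sum_filter_lt_add_add_sum_filter_gt g k,
      sum_eq_zero fun ℓ hℓ => hlow ℓ (mem_filter.1 hℓ).2] at hsum
    rw [sum_eq_zero fun ℓ hℓ => if_neg (hlow_not_least ℓ (mem_filter.1 hℓ).2)]
    simp only [hk, if_true, sum_neg_distrib, neg_zero, zero_add] at hsum ⊢
    exact (eq_neg_of_add_eq_zero_left hsum).symm
  · simp only [hk, if_false, sum_const_zero, add_zero]
    by_cases hks : k ∈ s
    · have hmin := s.isLeast_min' ⟨k, hks⟩
      have hlt : s.min' ⟨k, hks⟩ < k :=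
        lt_of_le_of_ne (hmin.2 hks) fun h => hk (h ▸ hmin)
      simp only [hmin.isLeast_iff_eq, sum_ite_eq, mem_filter, mem_univ, true_and, hlt,
        if_true, neg_neg]
    · simp [hg k hks]

end Telescoping

theorem Matrix.fromBlocks_sum {ι l m n o α : Type*} [AddCommMonoid α] (s : Finset ι)
    (A : ι → Matrix n l α) (B : ι → Matrix n m α) (C : ι → Matrix o l α)
    (D : ι → Matrix o m α) :
    ∑ k ∈ s, fromBlocks (A k) (B k) (C k) (D k)
      = fromBlocks (∑ k ∈ s, A k) (∑ k ∈ s, B k) (∑ k ∈ s, C k) (∑ k ∈ s, D k) := by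
  ext (i | i) (j | j) <;> simp [sum_apply]

section PosSemidef

variable {n m : Type*} [Fintype n] [Fintype m]

theorem Matrix.PosSemidef.fromBlocks_mul_add {A : Matrix n n ℝ} {S : Matrix m m ℝ}
    (hA : A.PosSemidef) (hS : S.PosSemidef) (W : Matrix n m ℝ) :
    (fromBlocks A (A * W) (A * W)ᵀ (Wᵀ * A * W + S)).PosSemidef := by
  classical
  have hAT : Aᵀ = A := isHermitian_iff_isSymm.1 hA.1
  have hA' := hA.conjTranspose_mul_mul_same (fromCols 1 W : Matrix n (n ⊕ m) ℝ)
  have hS' := hS.conjTranspose_mul_mul_same (fromCols 0 1 : Matrix m (n ⊕ m) ℝ)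
  rw [conjTranspose_eq_transpose_of_trivial, transpose_fromCols, fromRows_mul, mul_fromCols,
    fromRows_mul, fromRows_mul, fromCols_fromRows_eq_fromBlocks] at hA' hS'
  convert hA'.add hS' using 1
  simp [fromBlocks_add, transpose_mul, hAT]

theorem Matrix.PosDef.exists_sum_eq_posSemidef_fromBlocks {ι : Type*} [Fintype ι] [Nonempty ι]
    [DecidableEq n] {A : ι → Matrix n n ℝ} (hA : ∀ k, (A k).PosSemidef)
    (hAsum : (∑ k, A k).PosDef) {B : Matrix n m ℝ} {C : Matrix m m ℝ}
    (hM : (fromBlocks (∑ k, A k) B Bᵀ C).PosSemidef) :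
    ∃ Cs : ι → Matrix m m ℝ, ∑ k, Cs k = C ∧ ∀ k, (fromBlocks (A k) (A k * ((∑ k, A k)⁻¹ * B))
      (A k * ((∑ k, A k)⁻¹ * B))ᵀ (Cs k)).PosSemidef := by
  classical
  set A' := ∑ k, A k
  set W := A'⁻¹ * B
  have hA'T : A'ᵀ = A' := isHermitian_iff_isSymm.1 hAsum.1
  have : Invertible A' := hAsum.isUnit.invertible
  have hschur : (C - Bᵀ * A'⁻¹ * B).PosSemidef := by
    have := (hAsum.fromBlocks₁₁ B C).1
    rw [conjTranspose_eq_transpose_of_trivial] at this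
    exact this hM
  have hWAW : Wᵀ * A' * W = Bᵀ * A'⁻¹ * B := by
    rw [transpose_mul, transpose_nonsing_inv, hA'T, Matrix.mul_assoc, Matrix.mul_assoc,
      ← Matrix.mul_assoc A', mul_inv_of_invertible, Matrix.one_mul, Matrix.mul_assoc]
  let k₀ : ι := Classical.arbitrary ι
  refine ⟨fun k => Wᵀ * A k * W + if k = k₀ then C - Bᵀ * A'⁻¹ * B else 0, ?_, fun k => ?_⟩
  · rw [sum_add_distrib, sum_ite_eq' univ k₀, if_pos (mem_univ _), ← Matrix.sum_mul,
      ← Matrix.mul_sum, hWAW]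
    abel
  · refine (hA k).fromBlocks_mul_add ?_ W
    split_ifs
    exacts [hschur, .zero]

end PosSemidef

theorem RowSupportedOn.sub {n m : ℕ} {B B' : Matrix (Fin n) (Fin m) ℝ} {I : Finset (Fin n)}
    (hB : RowSupportedOn B I) (hB' : RowSupportedOn B' I) : RowSupportedOn (B - B') I :=
  fun i hi j => by simp [hB i hi j, hB' i hi j]

theorem RowSupportedOn.eq_zero {n m : ℕ} {B : Matrix (Fin n) (Fin m) ℝ}
    (hB : RowSupportedOn B ∅) : B = 0 :=
  ext fun i j => hB i (notMem_empty i) j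

theorem MatSupportedOn.rowSupportedOn_mul {n m : ℕ} {Y : Matrix (Fin n) (Fin n) ℝ}
    {I : Finset (Fin n)} (hY : MatSupportedOn Y I) (W : Matrix (Fin n) (Fin m) ℝ) :
    RowSupportedOn (Y * W) I :=
  fun i hi j => by
    rw [mul_apply]
    exact sum_eq_zero fun t _ => by rw [hY i t (Or.inl hi), zero_mul]

theorem exists_rowSupportedOn_inter_of_sum_eq_zero {ι : Type*} [Fintype ι] [LinearOrder ι]
    {n m : ℕ} (I : ι → Finset (Fin n)) (G : ι → Matrix (Fin n) (Fin m) ℝ)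
    (hG : ∀ k, RowSupportedOn (G k) (I k)) (hsum : ∑ k, G k = 0) :
    ∃ D : ι → ι → Matrix (Fin n) (Fin m) ℝ, (∀ k ℓ, RowSupportedOn (D k ℓ) (I k ∩ I ℓ)) ∧
      ∀ k, -(∑ ℓ ∈ univ.filter (fun ℓ => ℓ < k), D ℓ k)
        + ∑ ℓ ∈ univ.filter (fun ℓ => k < ℓ), D k ℓ = G k := by
  classical
  refine ⟨fun k ℓ => of fun i j =>
    if IsLeast (↑(univ.filter fun k' => i ∈ I k') : Set ι) k then -G ℓ i j else 0, ?_, ?_⟩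
  · intro k ℓ i hi j
    simp only [of_apply]
    split_ifs with hk
    · have hik : i ∈ I k := by simpa using hk.1
      rw [hG ℓ i (fun hiℓ => hi (mem_inter.2 ⟨hik, hiℓ⟩)) j, neg_zero]
    · rfl
  · intro k
    ext i j
    simpa [Matrix.sum_apply] using neg_sum_filter_lt_add_sum_filter_gt_eq
      (s := univ.filter fun k' => i ∈ I k') (g := fun k => G k i j)
      (fun k hk => hG k i (by simpa using hk) j)
      (by simpa [Matrix.sum_apply] using congrFun₂ hsum i j) k

theorem stmt3_general (n m p : ℕ) (hp : 2 ≤ p)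
    (I : Fin p → Finset (Fin n))
    (A : Fin p → Matrix (Fin n) (Fin n) ℝ)
    (hApsd : ∀ k, (A k).PosSemidef)
    (hAsupp : ∀ k, MatSupportedOn (A k) (I k))
    (B : Fin p → Matrix (Fin n) (Fin m) ℝ)
    (hBsupp : ∀ k, RowSupportedOn (B k) (I k))
    (hApd : (∑ k, A k).PosDef)
    (C : Matrix (Fin m) (Fin m) ℝ)
    (M : Matrix (Fin n ⊕ Fin m) (Fin n ⊕ Fin m) ℝ)
    (hM : M = (∑ k, Matrix.fromBlocks (A k) (B k) (B k)ᵀ 0)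
              + Matrix.fromBlocks 0 0 0 C) :
    M.PosSemidef ↔
      ∃ D : Fin p → Fin p → Matrix (Fin n) (Fin m) ℝ,
      ∃ Cs : Fin p → Matrix (Fin m) (Fin m) ℝ,
        (∀ k ℓ, k < ℓ → RowSupportedOn (D k ℓ) (I k ∩ I ℓ)) ∧
        (∀ k ℓ, k < ℓ → I k ∩ I ℓ = ∅ → D k ℓ = 0) ∧
        (∀ k, (Cs k).IsSymm) ∧
        (∑ k, Cs k) = C ∧
        (∀ k, (Matrix.fromBlocks (A k)
                (B k + (- (∑ ℓ ∈ Finset.univ.filter (fun ℓ => ℓ < k), D ℓ k)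
                        + (∑ ℓ ∈ Finset.univ.filter (fun ℓ => k < ℓ), D k ℓ)))
                (B k + (- (∑ ℓ ∈ Finset.univ.filter (fun ℓ => ℓ < k), D ℓ k)
                        + (∑ ℓ ∈ Finset.univ.filter (fun ℓ => k < ℓ), D k ℓ)))ᵀ
                (Cs k)).PosSemidef) ∧
        M = ∑ k, Matrix.fromBlocks (A k)
                (B k + (- (∑ ℓ ∈ Finset.univ.filter (fun ℓ => ℓ < k), D ℓ k)
                        + (∑ ℓ ∈ Finset.univ.filter (fun ℓ => k < ℓ), D k ℓ)))
                (B k + (- (∑ ℓ ∈ Finset.univ.filter (fun ℓ => ℓ < k), D ℓ k)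
                        + (∑ ℓ ∈ Finset.univ.filter (fun ℓ => k < ℓ), D k ℓ)))ᵀ
                (Cs k) := by
  have hMblocks : M = fromBlocks (∑ k, A k) (∑ k, B k) (∑ k, B k)ᵀ C := by
    rw [hM, fromBlocks_sum, fromBlocks_add, transpose_sum]
    simp
  constructor
  · intro hMpsd
    have : Nonempty (Fin p) := ⟨⟨0, by omega⟩⟩
    set W := (∑ k, A k)⁻¹ * ∑ k, B k
    obtain ⟨Cs, hCs_sum, hCs_psd⟩ :=
      hApd.exists_sum_eq_posSemidef_fromBlocks hApsd (hMblocks ▸ hMpsd)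
    have hAW : (∑ k, A k) * W = ∑ k, B k :=
      mul_nonsing_inv_cancel_left _ _ ((isUnit_iff_isUnit_det _).1 hApd.isUnit)
    obtain ⟨D, hD_supp, hD_sum⟩ := exists_rowSupportedOn_inter_of_sum_eq_zero I
      (fun k => A k * W - B k) (fun k => ((hAsupp k).rowSupportedOn_mul W).sub (hBsupp k))
      (by rw [sum_sub_distrib, ← Matrix.sum_mul, hAW, sub_self])
    have hBD : ∀ k, B k + (-(∑ ℓ ∈ univ.filter (fun ℓ => ℓ < k), D ℓ k)
        + ∑ ℓ ∈ univ.filter (fun ℓ => k < ℓ), D k ℓ) = A k * W := fun k => by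
      rw [hD_sum]
      abel
    refine ⟨D, Cs, fun k ℓ _ => hD_supp k ℓ, fun k ℓ _ h => (h ▸ hD_supp k ℓ).eq_zero,
      fun k => ?_, hCs_sum, fun k => hBD k ▸ hCs_psd k, ?_⟩
    · exact isHermitian_iff_isSymm.1 (isHermitian_fromBlocks_iff.1 (hCs_psd k).1).2.2.2
    · simp only [hBD, fromBlocks_sum, ← Matrix.sum_mul, ← transpose_sum, hAW, hCs_sum, hMblocks]
  · rintro ⟨D, Cs, -, -, -, -, hpsd, hsum⟩
    exact hsum ▸ posSemidef_sum univ fun k _ => hpsd k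

/-- Arrow decomposition theorem. -/
theorem stmt3 (n m p : ℕ) (hn : 3 ≤ n) (hm : 1 ≤ m) (hp : 2 ≤ p)
    (I : Fin p → Finset (Fin n))
    (hcover : ∀ i : Fin n, ∃ k, i ∈ I k)
    -- Assumption 1
    (h1 : ∀ k, ∃ ℓ, ℓ ≠ k ∧ (I k ∩ I ℓ).Nonempty)
    -- Assumption 2
    (h2 : ∀ k ℓ, k ≠ ℓ → ¬ I ℓ ⊆ I k)
    -- m is smaller than every nonempty overlap
    (hsize : ∀ k ℓ, k < ℓ → (I k ∩ I ℓ).Nonempty → m < (I k ∩ I ℓ).card)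
    (A : Fin p → Matrix (Fin n) (Fin n) ℝ)
    (hAsymm : ∀ k, (A k).IsSymm)
    (hApsd : ∀ k, (A k).PosSemidef)
    (hAsupp : ∀ k, MatSupportedOn (A k) (I k))
    (B : Fin p → Matrix (Fin n) (Fin m) ℝ)
    (hBsupp : ∀ k, RowSupportedOn (B k) (I k))
    (hApd : (∑ k, A k).PosDef)
    (C : Matrix (Fin m) (Fin m) ℝ) (hCsymm : C.IsSymm) (hC : C.PosDef)
    (M : Matrix (Fin n ⊕ Fin m) (Fin n ⊕ Fin m) ℝ)
    (hM : M = (∑ k, Matrix.fromBlocks (A k) (B k) (B k)ᵀ 0)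
              + Matrix.fromBlocks 0 0 0 C) :
    M.PosSemidef ↔
      ∃ D : Fin p → Fin p → Matrix (Fin n) (Fin m) ℝ,
      ∃ Cs : Fin p → Matrix (Fin m) (Fin m) ℝ,
        (∀ k ℓ, k < ℓ → RowSupportedOn (D k ℓ) (I k ∩ I ℓ)) ∧
        (∀ k ℓ, k < ℓ → I k ∩ I ℓ = ∅ → D k ℓ = 0) ∧
        (∀ k, (Cs k).IsSymm) ∧
        (∑ k, Cs k) = C ∧
        (∀ k, (Matrix.fromBlocks (A k)
                (B k + (- (∑ ℓ ∈ Finset.univ.filter (fun ℓ => ℓ < k), D ℓ k)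
                        + (∑ ℓ ∈ Finset.univ.filter (fun ℓ => k < ℓ), D k ℓ)))
                (B k + (- (∑ ℓ ∈ Finset.univ.filter (fun ℓ => ℓ < k), D ℓ k)
                        + (∑ ℓ ∈ Finset.univ.filter (fun ℓ => k < ℓ), D k ℓ)))ᵀ
                (Cs k)).PosSemidef) ∧
        M = ∑ k, Matrix.fromBlocks (A k)
                (B k + (- (∑ ℓ ∈ Finset.univ.filter (fun ℓ => ℓ < k), D ℓ k)
                        + (∑ ℓ ∈ Finset.univ.filter (fun ℓ => k < ℓ), D k ℓ)))
                (B k + (- (∑ ℓ ∈ Finset.univ.filter (fun ℓ => ℓ < k), D ℓ k)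
                        + (∑ ℓ ∈ Finset.univ.filter (fun ℓ => k < ℓ), D k ℓ)))ᵀ
                (Cs k) :=
  stmt3_general n m p hp I A hApsd hAsupp B hBsupp hApd C M hM
end

section
/- Let K be a symmetric real n×n matrix, f ∈ ℝⁿ and γ ∈ ℝ. The (n+1)×(n+1) block matrix Z = [K, f; fᵀ, γ] is positive semidefinite if and only if K is positive semidefinite and there exists u ∈ ℝⁿ with K u = f and fᵀu ≤ γ. -/
/-!
The quadratic form of `[K, f; fᵀ, γ]` at `(v, t)` is `vᵀKv + 2t fᵀv + t²γ`. If `Ku = f`, completing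
the square rewrites it as `(v + tu)ᵀK(v + tu) + t²(γ - fᵀu)`, which gives the backward direction and,
at `(v, t) = (-u, 1)`, the bound `fᵀu ≤ γ`. For `v ∈ ker K` the form at `(sv, 1)` is the affine
function `2s fᵀv + γ` of `s`, which is nonnegative only if `fᵀv = 0`; so `f ⊥ ker K = (range K)ᗮ`,
and `f` lies in the range of `K`.
-/

open Matrix

/-- The symmetric `(n+1)×(n+1)` block matrix `[K, f; fᵀ, γ]`. -/
def ArrowMat {n : ℕ} (K : Matrix (Fin n) (Fin n) ℝ) (f : Fin n → ℝ) (γ : ℝ) :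
    Matrix (Fin n ⊕ Unit) (Fin n ⊕ Unit) ℝ :=
  Matrix.fromBlocks K (Matrix.of fun i (_ : Unit) => f i)
    (Matrix.of fun (_ : Unit) j => f j) (Matrix.of fun (_ _ : Unit) => γ)

theorem eq_zero_of_forall_nonneg_mul_add {𝕜 : Type*} [Field 𝕜] [LinearOrder 𝕜]
    [IsStrictOrderedRing 𝕜] {a c : 𝕜} (h : ∀ s, 0 ≤ s * a + c) : a = 0 := by
  by_contra ha
  have := h (-(c + 1) / a)
  rw [div_mul_cancel₀ _ ha] at this
  linarith

open WithLp in
theorem Matrix.IsHermitian.exists_mulVec_eq_of_orthogonal_ker {𝕜 ι : Type*} [RCLike 𝕜]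
    [Fintype ι] [DecidableEq ι] {K : Matrix ι ι 𝕜} (hK : K.IsHermitian) {f : ι → 𝕜}
    (hf : ∀ v, K *ᵥ v = 0 → f ⬝ᵥ star v = 0) : ∃ u, K *ᵥ u = f := by
  have hf_mem : toLp 2 f ∈ LinearMap.range K.toEuclideanLin := by
    rw [← Submodule.orthogonal_orthogonal (LinearMap.range _),
      (isSymmetric_toEuclideanLin_iff.mpr hK).orthogonal_range]
    exact fun w hw => hf (ofLp w) (congrArg ofLp hw)
  obtain ⟨u, hu⟩ := hf_mem
  exact ⟨ofLp u, congrArg ofLp hu⟩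

theorem Matrix.IsSymm.dotProduct_mulVec_add_smul {ι R : Type*} [Fintype ι] [CommRing R]
    {K : Matrix ι ι R} (hK : K.IsSymm) {u f : ι → R} (hu : K *ᵥ u = f) (v : ι → R) (t : R) :
    (v + t • u) ⬝ᵥ K *ᵥ (v + t • u) = v ⬝ᵥ K *ᵥ v + 2 * t * (f ⬝ᵥ v) + t ^ 2 * (f ⬝ᵥ u) := by
  have hu' : u ⬝ᵥ K *ᵥ v = f ⬝ᵥ v := by
    rw [dotProduct_mulVec, ← mulVec_transpose, hK.eq, hu]
  simp only [mulVec_add, mulVec_smul, dotProduct_add, add_dotProduct, dotProduct_smul,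
    smul_dotProduct, hu', hu, dotProduct_comm v f, smul_eq_mul]
  rw [dotProduct_comm u f]
  ring

section ArrowMat

variable {n : ℕ} {K : Matrix (Fin n) (Fin n) ℝ} (f : Fin n → ℝ) (γ : ℝ)

theorem sumElim_dotProduct_arrowMat_mulVec (v : Fin n → ℝ) (t : ℝ) :
    Sum.elim v (fun _ => t) ⬝ᵥ ArrowMat K f γ *ᵥ Sum.elim v (fun _ => t) =
      v ⬝ᵥ K *ᵥ v + 2 * t * (f ⬝ᵥ v) + t ^ 2 * γ := by
  have hB : (of fun i (_ : Unit) => f i) *ᵥ (fun _ => t) = t • f := by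
    ext; simp [mulVec, dotProduct, mul_comm]
  have hC : (of fun (_ : Unit) j => f j) *ᵥ v = fun _ => f ⬝ᵥ v := rfl
  have hD : (of fun (_ _ : Unit) => γ) *ᵥ (fun _ => t) = fun _ => γ * t := by
    ext; simp [mulVec, dotProduct]
  have hU : ∀ g : Unit → ℝ, (fun _ => t) ⬝ᵥ g = t * g () := fun g => by simp [dotProduct]
  rw [ArrowMat, fromBlocks_mulVec, sumElim_dotProduct_sumElim, Sum.elim_comp_inl,
    Sum.elim_comp_inr, hB, hC, hD]
  simp only [dotProduct_add, dotProduct_smul, hU, smul_eq_mul, Pi.add_apply]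
  rw [dotProduct_comm v f]
  ring

theorem Matrix.IsSymm.arrowMat (hK : K.IsSymm) : (ArrowMat K f γ).IsSymm :=
  hK.fromBlocks rfl rfl

theorem arrowMat_posSemidef_iff (hK : K.IsSymm) :
    (ArrowMat K f γ).PosSemidef ↔ ∀ v t, 0 ≤ v ⬝ᵥ K *ᵥ v + 2 * t * (f ⬝ᵥ v) + t ^ 2 * γ := by
  refine ⟨fun hZ v t => ?_, fun hq => ?_⟩
  · simpa [sumElim_dotProduct_arrowMat_mulVec] using
      hZ.dotProduct_mulVec_nonneg (Sum.elim v fun _ => t)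
  · refine .of_dotProduct_mulVec_nonneg (isHermitian_iff_isSymm.mpr (hK.arrowMat f γ)) fun x => ?_
    have hx : x = Sum.elim (x ∘ Sum.inl) fun _ => x (Sum.inr ()) := by
      rw [← Sum.elim_comp_inl_inr x]
      rfl
    rw [star_trivial, hx, sumElim_dotProduct_arrowMat_mulVec]
    exact hq _ _

end ArrowMat

theorem stmt6 (n : ℕ) (K : Matrix (Fin n) (Fin n) ℝ) (hK : K.IsSymm)
    (f : Fin n → ℝ) (γ : ℝ) :
    (ArrowMat K f γ).PosSemidef ↔
      K.PosSemidef ∧ ∃ u : Fin n → ℝ, K.mulVec u = f ∧ f ⬝ᵥ u ≤ γ := by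
  have hKH : K.IsHermitian := isHermitian_iff_isSymm.mpr hK
  rw [arrowMat_posSemidef_iff f γ hK]
  constructor
  · intro hq
    have hf_ker : ∀ v, K *ᵥ v = 0 → f ⬝ᵥ star v = 0 := fun v hv => by
      have h2 : 2 * (f ⬝ᵥ v) = 0 := eq_zero_of_forall_nonneg_mul_add (c := γ) fun s => by
        simpa [mulVec_smul, hv, mul_left_comm] using hq (s • v) 1
      simpa using h2
    obtain ⟨u, hu⟩ := hKH.exists_mulVec_eq_of_orthogonal_ker hf_ker
    refine ⟨.of_dotProduct_mulVec_nonneg hKH fun v => by simpa using hq v 0, u, hu, ?_⟩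
    have h0 := hK.dotProduct_mulVec_add_smul hu (-u) 1
    simp only [one_smul, neg_add_cancel, zero_dotProduct] at h0
    linarith [hq (-u) 1]
  · rintro ⟨hKpsd, u, hu, hle⟩ v t
    have hsq := hKpsd.dotProduct_mulVec_nonneg (v + t • u)
    rw [star_trivial, hK.dotProduct_mulVec_add_smul hu] at hsq
    nlinarith [sq_nonneg t]
end

section
/- With the topology-optimization data below, suppose (x̃, ũ, γ̃) is an optimal solution of problem (P1), i.e., it is feasible for (P1) and γ̃ ≤ γ for every (x, u, γ) feasible for (P1). Then there exist γ̃₁, γ̃₂ ∈ ℝ and g̃ ∈ ℝⁿ supported on N₁ ∩ N₂ such that γ̃ = γ̃₁ + γ̃₂ and (x̃, ũ, γ̃₁, γ̃₂, g̃) is an optimal solution of problem (P2), i.e., it is feasible for (P2) and γ̃₁ + γ̃₂ ≤ γ₁ + γ₂ for every (x, u, γ₁, γ₂, g) feasible for (P2). -/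
open Matrix

/-- A vector is supported on `I` if `v i = 0` for every `i ∉ I`. -/
def VecSupportedOn {n : ℕ} (v : Fin n → ℝ) (I : Finset (Fin n)) : Prop :=
  ∀ i, i ∉ I → v i = 0

/-- Feasibility for problem (P1): minimize `γ` subject to
`(Σ xᵢ Kᵢ) u = f`, `fᵀu ≤ γ`, `Σ xᵢ ≤ V`, `x̲ᵢ ≤ xᵢ ≤ x̄ᵢ`. -/
def P1Feasible {n m : ℕ} (K : Fin m → Matrix (Fin n) (Fin n) ℝ) (f : Fin n → ℝ)
    (V : ℝ) (xlo xhi : Fin m → ℝ) (x : Fin m → ℝ) (u : Fin n → ℝ) (γ : ℝ) : Prop :=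
  (∑ i, x i • K i).mulVec u = f ∧ f ⬝ᵥ u ≤ γ ∧ (∑ i, x i) ≤ V ∧
    ∀ i, xlo i ≤ x i ∧ x i ≤ xhi i

/-- Feasibility for problem (P2): minimize `γ₁ + γ₂` subject to
`g` supported on `N₁ ∩ N₂`, `(Σ_{i∈𝒟₁} xᵢ Kᵢ) u = f⁽¹⁾ + g`,
`(Σ_{i∈𝒟₂} xᵢ Kᵢ) u = f⁽²⁾ − g`, `(f⁽¹⁾+g)ᵀu ≤ γ₁`, `(f⁽²⁾−g)ᵀu ≤ γ₂`,
`Σ xᵢ ≤ V`, `x̲ᵢ ≤ xᵢ ≤ x̄ᵢ`. -/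
def P2Feasible {n m : ℕ} (K : Fin m → Matrix (Fin n) (Fin n) ℝ)
    (D₁ D₂ : Finset (Fin m)) (N₁ N₂ : Finset (Fin n))
    (f₁ f₂ : Fin n → ℝ) (V : ℝ) (xlo xhi : Fin m → ℝ)
    (x : Fin m → ℝ) (u : Fin n → ℝ) (γ₁ γ₂ : ℝ) (g : Fin n → ℝ) : Prop :=
  VecSupportedOn g (N₁ ∩ N₂) ∧
  (∑ i ∈ D₁, x i • K i).mulVec u = f₁ + g ∧
  (∑ i ∈ D₂, x i • K i).mulVec u = f₂ - g ∧
  (f₁ + g) ⬝ᵥ u ≤ γ₁ ∧ (f₂ - g) ⬝ᵥ u ≤ γ₂ ∧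
  (∑ i, x i) ≤ V ∧ ∀ i, xlo i ≤ x i ∧ x i ≤ xhi i

/-
Summing the two state equations of (P2) gives the state equation of (P1), and the two compliance
bounds add up to `fᵀu ≤ γ₁ + γ₂` because the interface force `g` cancels; so every point feasible
for (P2) is feasible for (P1) with the same objective. Conversely, a point feasible for (P1) splits
by taking `g := (Σ_{i∈𝒟₁} xᵢ Kᵢ) u − f⁽¹⁾`: the first state equation holds by construction, the
second follows from the (P1) state equation, and `g` is supported on `N₁` (first equation) and on
`N₂` (second equation). With `γ₁ := (f⁽¹⁾ + g)ᵀu` and `γ₂ := γ − γ₁` the objective is unchanged,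
so the optimal values of the two problems agree.
-/

section Support

variable {n : ℕ}

theorem VecSupportedOn.sub {v w : Fin n → ℝ} {I : Finset (Fin n)}
    (hv : VecSupportedOn v I) (hw : VecSupportedOn w I) : VecSupportedOn (v - w) I := by
  intro i hi
  simp [hv i hi, hw i hi]

theorem VecSupportedOn.inter {v : Fin n → ℝ} {I J : Finset (Fin n)}
    (hI : VecSupportedOn v I) (hJ : VecSupportedOn v J) : VecSupportedOn v (I ∩ J) := by
  intro i hi
  by_cases hiI : i ∈ I
  · exact hJ i fun hiJ => hi (Finset.mem_inter.mpr ⟨hiI, hiJ⟩)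
  · exact hI i hiI

theorem MatSupportedOn.mulVec {Y : Matrix (Fin n) (Fin n) ℝ} {I : Finset (Fin n)}
    (hY : MatSupportedOn Y I) (u : Fin n → ℝ) : VecSupportedOn (Y *ᵥ u) I := by
  intro i hi
  simp [Matrix.mulVec, dotProduct, hY i _ (Or.inl hi)]

theorem MatSupportedOn.sum_smul {m : ℕ} {K : Fin m → Matrix (Fin n) (Fin n) ℝ}
    {s : Finset (Fin m)} {I : Finset (Fin n)} (hK : ∀ i ∈ s, MatSupportedOn (K i) I)
    (x : Fin m → ℝ) : MatSupportedOn (∑ i ∈ s, x i • K i) I := by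
  intro a b hab
  rw [Matrix.sum_apply]
  exact Finset.sum_eq_zero fun i hi => by simp [hK i hi a b hab]

end Support

section Decomposition

variable {n m : ℕ} {K : Fin m → Matrix (Fin n) (Fin n) ℝ} {D₁ D₂ : Finset (Fin m)}
  {N₁ N₂ : Finset (Fin n)} {f₁ f₂ : Fin n → ℝ} {V : ℝ} {xlo xhi : Fin m → ℝ}

theorem sum_smul_eq_add_of_partition (hD : D₁ ∪ D₂ = Finset.univ) (hdisj : Disjoint D₁ D₂)
    (x : Fin m → ℝ) :
    ∑ i, x i • K i = ∑ i ∈ D₁, x i • K i + ∑ i ∈ D₂, x i • K i := by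
  rw [← Finset.sum_union hdisj, hD]

theorem P1Feasible_of_P2Feasible (hD : D₁ ∪ D₂ = Finset.univ) (hdisj : Disjoint D₁ D₂)
    {x : Fin m → ℝ} {u : Fin n → ℝ} {γ₁ γ₂ : ℝ} {g : Fin n → ℝ}
    (h : P2Feasible K D₁ D₂ N₁ N₂ f₁ f₂ V xlo xhi x u γ₁ γ₂ g) :
    P1Feasible K (f₁ + f₂) V xlo xhi x u (γ₁ + γ₂) := by
  obtain ⟨-, hstate₁, hstate₂, hcompl₁, hcompl₂, hV, hbox⟩ := h
  have hforce : f₁ + f₂ = (f₁ + g) + (f₂ - g) := by abel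
  refine ⟨?_, ?_, hV, hbox⟩
  · rw [sum_smul_eq_add_of_partition hD hdisj, add_mulVec, hstate₁, hstate₂, hforce]
  · rw [hforce, add_dotProduct]
    exact add_le_add hcompl₁ hcompl₂

theorem P2Feasible_of_P1Feasible (hD : D₁ ∪ D₂ = Finset.univ) (hdisj : Disjoint D₁ D₂)
    (hK₁ : ∀ i ∈ D₁, MatSupportedOn (K i) N₁) (hK₂ : ∀ i ∈ D₂, MatSupportedOn (K i) N₂)
    (hf₁ : VecSupportedOn f₁ N₁) (hf₂ : VecSupportedOn f₂ N₂)
    {x : Fin m → ℝ} {u : Fin n → ℝ} {γ : ℝ} (h : P1Feasible K (f₁ + f₂) V xlo xhi x u γ) :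
    let g := (∑ i ∈ D₁, x i • K i) *ᵥ u - f₁
    P2Feasible K D₁ D₂ N₁ N₂ f₁ f₂ V xlo xhi x u ((f₁ + g) ⬝ᵥ u) (γ - (f₁ + g) ⬝ᵥ u) g := by
  intro g
  obtain ⟨hstate, hcompl, hV, hbox⟩ := h
  have hstate₁ : (∑ i ∈ D₁, x i • K i) *ᵥ u = f₁ + g := by simp [g]
  have hstate₂ : (∑ i ∈ D₂, x i • K i) *ᵥ u = f₂ - g := by
    rw [sum_smul_eq_add_of_partition hD hdisj, add_mulVec, hstate₁] at hstate
    rw [eq_sub_iff_add_eq, ← add_left_cancel_iff (a := f₁), ← hstate]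
    abel
  have hg₁ : VecSupportedOn g N₁ :=
    ((MatSupportedOn.sum_smul hK₁ x).mulVec u).sub hf₁
  have hg₂ : VecSupportedOn g N₂ := by
    have h := hf₂.sub ((MatSupportedOn.sum_smul hK₂ x).mulVec u)
    rwa [hstate₂, sub_sub_cancel] at h
  have hcompl₂ : (f₂ - g) ⬝ᵥ u ≤ γ - (f₁ + g) ⬝ᵥ u := by
    rw [le_sub_iff_add_le, ← add_dotProduct, sub_add_add_cancel, add_comm]
    exact hcompl
  exact ⟨hg₁.inter hg₂, hstate₁, hstate₂, le_rfl, hcompl₂, hV, hbox⟩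

end Decomposition

theorem stmt8_general (n m : ℕ) (K : Fin m → Matrix (Fin n) (Fin n) ℝ)
    (D₁ D₂ : Finset (Fin m)) (hD : D₁ ∪ D₂ = Finset.univ) (hDdisj : D₁ ∩ D₂ = ∅)
    (N₁ N₂ : Finset (Fin n))
    (hK₁ : ∀ i ∈ D₁, MatSupportedOn (K i) N₁)
    (hK₂ : ∀ i ∈ D₂, MatSupportedOn (K i) N₂)
    (f₁ f₂ : Fin n → ℝ)
    (hf₁ : VecSupportedOn f₁ N₁) (hf₂ : VecSupportedOn f₂ N₂)
    (V : ℝ) (xlo xhi : Fin m → ℝ)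
    (xt : Fin m → ℝ) (ut : Fin n → ℝ) (γt : ℝ)
    (hfeas : P1Feasible K (f₁ + f₂) V xlo xhi xt ut γt)
    (hopt : ∀ x u γ, P1Feasible K (f₁ + f₂) V xlo xhi x u γ → γt ≤ γ) :
    ∃ γ₁ γ₂ : ℝ, ∃ g : Fin n → ℝ,
      VecSupportedOn g (N₁ ∩ N₂) ∧ γt = γ₁ + γ₂ ∧
      P2Feasible K D₁ D₂ N₁ N₂ f₁ f₂ V xlo xhi xt ut γ₁ γ₂ g ∧
      ∀ x u γ₁' γ₂' g', P2Feasible K D₁ D₂ N₁ N₂ f₁ f₂ V xlo xhi x u γ₁' γ₂' g' →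
        γ₁ + γ₂ ≤ γ₁' + γ₂' := by
  have hdisj : Disjoint D₁ D₂ := Finset.disjoint_iff_inter_eq_empty.mpr hDdisj
  have hsplit := P2Feasible_of_P1Feasible hD hdisj hK₁ hK₂ hf₁ hf₂ hfeas
  refine ⟨_, _, _, hsplit.1, (add_sub_cancel _ _).symm, hsplit, ?_⟩
  intro x u γ₁' γ₂' g' h
  rw [add_sub_cancel]
  exact hopt x u _ (P1Feasible_of_P2Feasible hD hdisj h)

theorem stmt8 (n m : ℕ) (K : Fin m → Matrix (Fin n) (Fin n) ℝ)
    (hKsymm : ∀ i, (K i).IsSymm) (hKpsd : ∀ i, (K i).PosSemidef)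
    (D₁ D₂ : Finset (Fin m)) (hD : D₁ ∪ D₂ = Finset.univ) (hDdisj : D₁ ∩ D₂ = ∅)
    (N₁ N₂ : Finset (Fin n)) (hN : N₁ ∪ N₂ = Finset.univ)
    (hK₁ : ∀ i ∈ D₁, MatSupportedOn (K i) N₁)
    (hK₂ : ∀ i ∈ D₂, MatSupportedOn (K i) N₂)
    (f₁ f₂ : Fin n → ℝ)
    (hf₁ : VecSupportedOn f₁ N₁) (hf₂ : VecSupportedOn f₂ N₂)
    (V : ℝ) (xlo xhi : Fin m → ℝ)
    (xt : Fin m → ℝ) (ut : Fin n → ℝ) (γt : ℝ)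
    (hfeas : P1Feasible K (f₁ + f₂) V xlo xhi xt ut γt)
    (hopt : ∀ x u γ, P1Feasible K (f₁ + f₂) V xlo xhi x u γ → γt ≤ γ) :
    ∃ γ₁ γ₂ : ℝ, ∃ g : Fin n → ℝ,
      VecSupportedOn g (N₁ ∩ N₂) ∧ γt = γ₁ + γ₂ ∧
      P2Feasible K D₁ D₂ N₁ N₂ f₁ f₂ V xlo xhi xt ut γ₁ γ₂ g ∧
      ∀ x u γ₁' γ₂' g', P2Feasible K D₁ D₂ N₁ N₂ f₁ f₂ V xlo xhi x u γ₁' γ₂' g' →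
        γ₁ + γ₂ ≤ γ₁' + γ₂' :=
  stmt8_general n m K D₁ D₂ hD hDdisj N₁ N₂ hK₁ hK₂ f₁ f₂ hf₁ hf₂ V xlo xhi xt ut γt hfeas hopt
end
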